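/- Let Φ be a Young function, w a weight, φ : ℝⁿ×(0,∞) → (0,∞) in the class 𝒢_Φ^w, and B₀ = B(x₀,r₀) a ball. Then the norm of χ_{B₀} in the generalized weighted Orlicz–Morrey space satisfies 1/φ(B₀) ≤ ‖χ_{B₀}‖_{M^{Φ,φ}_w} ≤ C/φ(B₀) for a constant C > 0 depending only on the constants in the definition of 𝒢_Φ^w. -/

import Mathlib

open scoped ENNReal NNReal
open MeasureTheory Filter Set

/-- A Young function `Φ : [0,∞) → [0,∞]`: convex, left-continuous, `Φ(0)=0`,
`Φ(r) → 0` as `r → 0⁺`, and `Φ(r) → ∞` as `r → ∞`. -/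
structure YoungFunction where
  toFun : ℝ≥0 → ℝ≥0∞
  convex' : ∀ (a b t : ℝ≥0), t ≤ 1 →
    toFun (t * a + (1 - t) * b) ≤ (t : ℝ≥0∞) * toFun a + ((1 - t : ℝ≥0) : ℝ≥0∞) * toFun b
  leftContinuous' : ∀ r : ℝ≥0, ContinuousWithinAt toFun (Set.Iic r) r
  map_zero' : toFun 0 = 0
  tendsto_zero' : Filter.Tendsto toFun (nhdsWithin 0 (Set.Ioi 0)) (nhds 0)
  tendsto_top' : Filter.Tendsto toFun Filter.atTop (nhds ⊤)

/-- Generalized inverse `Φ⁻¹(s) = inf {r ≥ 0 : Φ(r) > s}` (with `inf ∅ = ∞`). -/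
noncomputable def yInv (Φ : ℝ≥0 → ℝ≥0∞) (s : ℝ≥0∞) : ℝ≥0∞ :=
  sInf {t : ℝ≥0∞ | ∃ r : ℝ≥0, t = (r : ℝ≥0∞) ∧ s < Φ r}

/-- Complementary Young function `Φ̃(r) = sup {rs − Φ(s) : s ≥ 0}`. -/
noncomputable def yCompl (Φ : ℝ≥0 → ℝ≥0∞) : ℝ≥0 → ℝ≥0∞ :=
  fun r => ⨆ s : ℝ≥0, (((r * s : ℝ≥0) : ℝ≥0∞) - Φ s)

/-- The `Δ₂` condition. -/
def Delta2 (Φ : ℝ≥0 → ℝ≥0∞) : Prop :=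
  ∃ k : ℝ≥0, 1 < k ∧ ∀ r : ℝ≥0, 0 < r → Φ (2 * r) ≤ (k : ℝ≥0∞) * Φ r

/-- The `∇₂` condition. -/
def Nabla2 (Φ : ℝ≥0 → ℝ≥0∞) : Prop :=
  ∃ k : ℝ≥0, 1 < k ∧ ∀ r : ℝ≥0, Φ r ≤ Φ (k * r) / ((2 * k : ℝ≥0) : ℝ≥0∞)

/-- `Φ` is of upper type `p`. -/
def IsUpperType (Φ : ℝ≥0 → ℝ≥0∞) (p : ℝ) : Prop :=
  ∃ C : ℝ≥0, 0 < C ∧ ∀ (s t : ℝ≥0), 1 ≤ t → Φ (s * t) ≤ ((C * t ^ p : ℝ≥0) : ℝ≥0∞) * Φ s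

/-- `Φ` is of lower type `p`. -/
def IsLowerType (Φ : ℝ≥0 → ℝ≥0∞) (p : ℝ) : Prop :=
  ∃ C : ℝ≥0, 0 < C ∧ ∀ (s t : ℝ≥0), t ≤ 1 → Φ (s * t) ≤ ((C * t ^ p : ℝ≥0) : ℝ≥0∞) * Φ s

/-- The weighted Orlicz (Luxemburg) norm
`‖f‖ = inf {λ > 0 : ∫ Φ(|f(x)|/λ) w(x) dx ≤ 1}`. -/
noncomputable def luxNorm (n : ℕ) (Φ : ℝ≥0 → ℝ≥0∞) (w : (Fin n → ℝ) → ℝ≥0∞)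
    (f : (Fin n → ℝ) → ℝ) : ℝ≥0∞ :=
  sInf {l : ℝ≥0∞ | ∃ lam : ℝ≥0, 0 < lam ∧ l = (lam : ℝ≥0∞) ∧
    (∫⁻ x, Φ (‖f x‖₊ / lam) * w x) ≤ 1}

/-- The weak weighted Orlicz norm
`‖f‖ = inf {λ > 0 : sup_{t>0} Φ(t) · w({x : |f(x)|/λ > t}) ≤ 1}`. -/
noncomputable def weakLuxNorm (n : ℕ) (Φ : ℝ≥0 → ℝ≥0∞) (w : (Fin n → ℝ) → ℝ≥0∞)
    (f : (Fin n → ℝ) → ℝ) : ℝ≥0∞ :=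
  sInf {l : ℝ≥0∞ | ∃ lam : ℝ≥0, 0 < lam ∧ l = (lam : ℝ≥0∞) ∧
    ∀ t : ℝ≥0, 0 < t → Φ t * (∫⁻ x in {x | t < ‖f x‖₊ / lam}, w x) ≤ 1}

/-- The weight of a ball, `w(B) = ∫_B w`. -/
noncomputable def wBall (n : ℕ) (w : (Fin n → ℝ) → ℝ≥0∞) (x : Fin n → ℝ) (r : ℝ) : ℝ≥0∞ :=
  ∫⁻ y in Metric.ball x r, w y

/-- The Muckenhoupt `A₁` condition. -/
def IsA1 (n : ℕ) (w : (Fin n → ℝ) → ℝ≥0∞) : Prop :=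
  ∃ C : ℝ≥0∞, C < ⊤ ∧ ∀ (x : Fin n → ℝ) (r : ℝ), 0 < r →
    ∀ᵐ y ∂(MeasureTheory.volume.restrict (Metric.ball x r)),
      wBall n w x r / MeasureTheory.volume (Metric.ball x r) ≤ C * w y

/-- The Muckenhoupt `A_p` condition for `1 < p < ∞`. -/
def IsAp (n : ℕ) (w : (Fin n → ℝ) → ℝ≥0∞) (p : ℝ) : Prop :=
  ∃ C : ℝ≥0∞, C < ⊤ ∧ ∀ (x : Fin n → ℝ) (r : ℝ), 0 < r →
    (wBall n w x r / MeasureTheory.volume (Metric.ball x r)) *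
      ((∫⁻ y in Metric.ball x r, (w y) ^ (-(p - 1)⁻¹)) /
        MeasureTheory.volume (Metric.ball x r)) ^ (p - 1) ≤ C

/-- The Muckenhoupt `A_∞` class: `A_∞ = ⋃_{p ≥ 1} A_p`. -/
def IsAinf (n : ℕ) (w : (Fin n → ℝ) → ℝ≥0∞) : Prop :=
  IsA1 n w ∨ ∃ p : ℝ, 1 < p ∧ IsAp n w p

/-- The generalized weighted Orlicz–Morrey norm
`‖f‖ = sup_{B} φ(B)⁻¹ Φ⁻¹(w(B)⁻¹) ‖f‖_{L^Φ_w(B)}`. -/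
noncomputable def morreyNorm (n : ℕ) (Φ : ℝ≥0 → ℝ≥0∞) (w : (Fin n → ℝ) → ℝ≥0∞)
    (φ : (Fin n → ℝ) → ℝ → ℝ≥0∞) (f : (Fin n → ℝ) → ℝ) : ℝ≥0∞ :=
  ⨆ (x : Fin n → ℝ) (r : ℝ) (_ : 0 < r),
    (φ x r)⁻¹ * yInv Φ ((wBall n w x r)⁻¹) *
      luxNorm n Φ w ((Metric.ball x r).indicator f)

/-! The Luxemburg norm of `χ_E` is exactly `1/Φ⁻¹(w(E)⁻¹)`, because `∫ Φ(χ_E/λ) w ≤ 1` just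
says `Φ(1/λ) ≤ w(E)⁻¹`. So the ball `B₀` itself contributes `1/φ(B₀)` to the Morrey supremum.
For any other ball `B`, `‖χ_{B∩B₀}‖` is at most both `‖χ_B‖` and `‖χ_{B₀}‖`. If `B` is smaller
than `B₀`, the first bound leaves `1/φ(B)`, which the almost-monotonicity (i) of `φ` controls;
if `B` is larger, the second leaves `Φ⁻¹(w(B)⁻¹)/φ(B) · 1/Φ⁻¹(w(B₀)⁻¹)`, which (ii) controls. -/

namespace YoungFunction

variable (Φ : YoungFunction)

theorem monotone : Monotone Φ.toFun := by
  intro a b hab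
  rcases eq_zero_or_pos b with rfl | hb
  · rw [nonpos_iff_eq_zero.1 hab]
  · have hab' : a / b ≤ 1 := (div_le_one hb).2 hab
    have h := Φ.convex' b 0 (a / b) hab'
    rw [mul_zero, add_zero, div_mul_cancel₀ a hb.ne', Φ.map_zero', mul_zero, add_zero] at h
    exact h.trans (mul_le_of_le_one_left zero_le (by exact_mod_cast hab'))

end YoungFunction

section GeneralizedInverse

variable {Φ : ℝ≥0 → ℝ≥0∞} {s : ℝ≥0∞} {t : ℝ≥0}

theorem le_yInv (hΦ : Monotone Φ) (h : Φ t ≤ s) : (t : ℝ≥0∞) ≤ yInv Φ s := by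
  refine le_sInf ?_
  rintro _ ⟨r, rfl, hr⟩
  exact_mod_cast le_of_not_gt fun hrt => (hr.trans_le ((hΦ hrt.le).trans h)).false

theorem yInv_le (h : s < Φ t) : yInv Φ s ≤ t :=
  sInf_le ⟨t, rfl, h⟩

theorem le_of_lt_yInv (h : (t : ℝ≥0∞) < yInv Φ s) : Φ t ≤ s :=
  not_lt.1 fun hst => h.not_ge (yInv_le hst)

theorem inv_yInv_eq_sInf (hΦ : Monotone Φ) (s : ℝ≥0∞) :
    (yInv Φ s)⁻¹ = sInf {l | ∃ lam : ℝ≥0, 0 < lam ∧ l = (lam : ℝ≥0∞) ∧ Φ lam⁻¹ ≤ s} := by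
  apply le_antisymm
  · refine le_sInf ?_
    rintro _ ⟨lam, hlam, rfl, hΦlam⟩
    have := le_yInv hΦ hΦlam
    rw [ENNReal.coe_inv hlam.ne'] at this
    exact ENNReal.inv_le_iff_inv_le.2 this
  · refine le_of_forall_gt_imp_ge_of_dense fun c hc => ?_
    obtain rfl | hc_top := eq_or_ne c ⊤
    · exact le_top
    lift c to ℝ≥0 using hc_top
    have hc0 : 0 < c := by exact_mod_cast zero_le.trans_lt hc
    refine sInf_le ⟨c, hc0, rfl, le_of_lt_yInv ?_⟩
    rw [ENNReal.coe_inv hc0.ne']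
    exact ENNReal.inv_lt_iff_inv_lt.1 hc

end GeneralizedInverse

theorem yInv_pos (Φ : YoungFunction) {s : ℝ≥0∞} (hs : 0 < s) : 0 < yInv Φ.toFun s := by
  obtain ⟨t, hΦt, ht⟩ :=
    ((Φ.tendsto_zero'.eventually (Iio_mem_nhds hs)).and self_mem_nhdsWithin).exists
  exact (ENNReal.coe_pos.2 ht).trans_le (le_yInv Φ.monotone (le_of_lt hΦt))

theorem yInv_lt_top (Φ : YoungFunction) {s : ℝ≥0∞} (hs : s < ⊤) : yInv Φ.toFun s < ⊤ := by
  obtain ⟨r, hr⟩ := (Φ.tendsto_top'.eventually (Ioi_mem_nhds hs)).exists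
  exact (yInv_le hr).trans_lt ENNReal.coe_lt_top

section Luxemburg

variable {n : ℕ} (Φ : YoungFunction) {w : (Fin n → ℝ) → ℝ≥0∞}

theorem luxNorm_mono {f g : (Fin n → ℝ) → ℝ} (h : ∀ x, ‖f x‖ ≤ ‖g x‖) :
    luxNorm n Φ.toFun w f ≤ luxNorm n Φ.toFun w g := by
  refine sInf_le_sInf ?_
  rintro _ ⟨lam, hlam, rfl, hint⟩
  refine ⟨lam, hlam, rfl, le_trans (lintegral_mono fun x => ?_) hint⟩
  gcongr
  exact Φ.monotone (div_le_div_of_nonneg_right (NNReal.coe_le_coe.1 (h x)) zero_le)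

theorem lintegral_indicator_one_le_one_iff {E : Set (Fin n → ℝ)} (hE : MeasurableSet E)
    (hwE : ∫⁻ x in E, w x ≠ 0) (lam : ℝ≥0) :
    ∫⁻ x, Φ.toFun (‖E.indicator (fun _ => (1 : ℝ)) x‖₊ / lam) * w x ≤ 1 ↔
      Φ.toFun lam⁻¹ ≤ (∫⁻ x in E, w x)⁻¹ := by
  have hint : ∫⁻ x, Φ.toFun (‖E.indicator (fun _ => (1 : ℝ)) x‖₊ / lam) * w x =
      ∫⁻ x in E, Φ.toFun lam⁻¹ * w x := by
    rw [← lintegral_indicator hE]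
    refine lintegral_congr fun x => ?_
    by_cases hx : x ∈ E <;> simp [hx, Φ.map_zero']
  rw [hint]
  constructor
  · intro h
    exact ENNReal.le_inv_iff_mul_le.2 ((lintegral_const_mul_le _ _).trans h)
  · intro h
    calc ∫⁻ x in E, Φ.toFun lam⁻¹ * w x ≤ ∫⁻ x in E, (∫⁻ x in E, w x)⁻¹ * w x := by gcongr
      _ = (∫⁻ x in E, w x)⁻¹ * ∫⁻ x in E, w x :=
        lintegral_const_mul' _ _ (ENNReal.inv_ne_top.2 hwE)
      _ ≤ 1 := ENNReal.inv_mul_le_one _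

theorem luxNorm_indicator_one {E : Set (Fin n → ℝ)} (hE : MeasurableSet E)
    (hwE : ∫⁻ x in E, w x ≠ 0) :
    luxNorm n Φ.toFun w (E.indicator fun _ => (1 : ℝ)) =
      (yInv Φ.toFun (∫⁻ x in E, w x)⁻¹)⁻¹ := by
  simp only [inv_yInv_eq_sInf Φ.monotone, luxNorm, lintegral_indicator_one_le_one_iff Φ hE hwE]

end Luxemburg

section Morrey

variable {n : ℕ} (Φ : YoungFunction) {w : (Fin n → ℝ) → ℝ≥0∞} {φ : (Fin n → ℝ) → ℝ → ℝ≥0∞}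
  {x₀ : Fin n → ℝ} {r₀ : ℝ}

theorem luxNorm_indicator_ball {x : Fin n → ℝ} {r : ℝ} (hw : wBall n w x r ≠ 0) :
    luxNorm n Φ.toFun w ((Metric.ball x r).indicator fun _ => (1 : ℝ)) =
      (yInv Φ.toFun (wBall n w x r)⁻¹)⁻¹ :=
  luxNorm_indicator_one Φ measurableSet_ball hw

theorem inv_le_morreyNorm_indicator_ball (hr₀ : 0 < r₀) (hw₀ : 0 < wBall n w x₀ r₀)
    (hw₀' : wBall n w x₀ r₀ < ⊤) :
    (φ x₀ r₀)⁻¹ ≤ morreyNorm n Φ.toFun w φ ((Metric.ball x₀ r₀).indicator fun _ => (1 : ℝ)) := by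
  refine le_of_eq_of_le ?_ (le_iSup₂_of_le x₀ r₀ (le_iSup_of_le hr₀ le_rfl))
  rw [indicator_indicator, inter_self, luxNorm_indicator_ball Φ hw₀.ne',
    ENNReal.mul_inv_cancel_right (yInv_pos Φ (ENNReal.inv_pos.2 hw₀'.ne)).ne'
      (yInv_lt_top Φ (ENNReal.inv_lt_top.2 hw₀)).ne]

theorem morreyNorm_indicator_ball_le
    (hw : ∀ (x : Fin n → ℝ) (r : ℝ), 0 < r → 0 < wBall n w x r ∧ wBall n w x r < ⊤)
    (hr₀ : 0 < r₀) (hφ₀ : φ x₀ r₀ ≠ 0) {c₁ c₂ : ℝ≥0∞} (hc₁ : c₁ ≠ 0) (hc₂ : c₂ ≠ 0)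
    (hG₁ : ∀ (x : Fin n → ℝ) (r : ℝ), 0 < r → r ≤ r₀ → c₁ * φ x₀ r₀ ≤ φ x r)
    (hG₂ : ∀ (x : Fin n → ℝ) (r : ℝ), 0 < r → r₀ ≤ r →
      c₂ * (φ x₀ r₀ / yInv Φ.toFun ((wBall n w x₀ r₀)⁻¹)) ≤
        φ x r / yInv Φ.toFun ((wBall n w x r)⁻¹)) :
    morreyNorm n Φ.toFun w φ ((Metric.ball x₀ r₀).indicator fun _ => (1 : ℝ)) ≤
      max c₁⁻¹ c₂⁻¹ * (φ x₀ r₀)⁻¹ := by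
  have hu : ∀ (x : Fin n → ℝ) (r : ℝ), 0 < r →
      yInv Φ.toFun (wBall n w x r)⁻¹ ≠ 0 ∧ yInv Φ.toFun (wBall n w x r)⁻¹ ≠ ⊤ := fun x r hr =>
    ⟨(yInv_pos Φ (ENNReal.inv_pos.2 (hw x r hr).2.ne)).ne',
      (yInv_lt_top Φ (ENNReal.inv_lt_top.2 (hw x r hr).1)).ne⟩
  refine iSup₂_le fun x r => iSup_le fun hr => ?_
  rw [indicator_indicator]
  set u := yInv Φ.toFun (wBall n w x r)⁻¹
  set u₀ := yInv Φ.toFun (wBall n w x₀ r₀)⁻¹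
  rcases le_total r r₀ with hrr | hrr
  · have hL : luxNorm n Φ.toFun w ((Metric.ball x r ∩ Metric.ball x₀ r₀).indicator
        fun _ => (1 : ℝ)) ≤ u⁻¹ := by
      rw [← luxNorm_indicator_ball Φ (hw x r hr).1.ne']
      exact luxNorm_mono Φ (norm_indicator_le_of_subset inter_subset_left _)
    calc (φ x r)⁻¹ * u * _ ≤ (φ x r)⁻¹ * (u * u⁻¹) := by rw [mul_assoc]; gcongr
      _ ≤ (φ x r)⁻¹ := mul_le_of_le_one_right zero_le (ENNReal.mul_inv_le_one u)
      _ ≤ (c₁ * φ x₀ r₀)⁻¹ := ENNReal.inv_le_inv.2 (hG₁ x r hr hrr)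
      _ = c₁⁻¹ * (φ x₀ r₀)⁻¹ := ENNReal.mul_inv (.inl hc₁) (.inr hφ₀)
      _ ≤ max c₁⁻¹ c₂⁻¹ * (φ x₀ r₀)⁻¹ := by gcongr; exact le_max_left _ _
  · have hL : luxNorm n Φ.toFun w ((Metric.ball x r ∩ Metric.ball x₀ r₀).indicator
        fun _ => (1 : ℝ)) ≤ u₀⁻¹ := by
      rw [← luxNorm_indicator_ball Φ (hw x₀ r₀ hr₀).1.ne']
      exact luxNorm_mono Φ (norm_indicator_le_of_subset inter_subset_right _)
    calc (φ x r)⁻¹ * u * _ ≤ (φ x r / u)⁻¹ * u₀⁻¹ := by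
          rw [ENNReal.inv_div (.inl (hu x r hr).2) (.inl (hu x r hr).1), div_eq_mul_inv,
            mul_comm u]
          gcongr
      _ ≤ (c₂ * (φ x₀ r₀ / u₀))⁻¹ * u₀⁻¹ := by gcongr; exact hG₂ x r hr hrr
      _ = c₂⁻¹ * (φ x₀ r₀)⁻¹ := by
          rw [ENNReal.mul_inv (.inl hc₂) (.inr (ENNReal.div_pos hφ₀ (hu x₀ r₀ hr₀).2).ne'),
            ENNReal.inv_div (.inl (hu x₀ r₀ hr₀).2) (.inl (hu x₀ r₀ hr₀).1), div_eq_mul_inv,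
            mul_assoc, mul_right_comm, ENNReal.mul_inv_cancel (hu x₀ r₀ hr₀).1 (hu x₀ r₀ hr₀).2,
            one_mul]
      _ ≤ max c₁⁻¹ c₂⁻¹ * (φ x₀ r₀)⁻¹ := by gcongr; exact le_max_right _ _

end Morrey

/-- If `φ ∈ 𝒢_Φ^w`, then `1/φ(B₀) ≤ ‖χ_{B₀}‖_{M^{Φ,φ}_w} ≤ C/φ(B₀)` with `C` depending
only on the constants in the definition of `𝒢_Φ^w`. -/
theorem morreyNorm_indicator_ball (n : ℕ) (Φ : YoungFunction)
    (w : (Fin n → ℝ) → ℝ≥0∞) (φ : (Fin n → ℝ) → ℝ → ℝ≥0∞)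
    (hφ : ∀ (x : Fin n → ℝ) (r : ℝ), 0 < r → 0 < φ x r ∧ φ x r < ⊤)
    (hw : ∀ (x : Fin n → ℝ) (r : ℝ), 0 < r → 0 < wBall n w x r ∧ wBall n w x r < ⊤)
    (c₁ : ℝ≥0∞) (hc₁ : 0 < c₁)
    (hG₁ : ∀ (x : Fin n → ℝ) (r : ℝ) (x₀ : Fin n → ℝ) (r₀ : ℝ), 0 < r → 0 < r₀ → r ≤ r₀ →
      c₁ * φ x₀ r₀ ≤ φ x r)
    (c₂ : ℝ≥0∞) (hc₂ : 0 < c₂)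
    (hG₂ : ∀ (x : Fin n → ℝ) (r : ℝ) (x₀ : Fin n → ℝ) (r₀ : ℝ), 0 < r → 0 < r₀ → r₀ ≤ r →
      c₂ * (φ x₀ r₀ / yInv Φ.toFun ((wBall n w x₀ r₀)⁻¹)) ≤
        φ x r / yInv Φ.toFun ((wBall n w x r)⁻¹)) :
    ∃ C : ℝ≥0∞, 0 < C ∧ C < ⊤ ∧ ∀ (x₀ : Fin n → ℝ) (r₀ : ℝ), 0 < r₀ →
      (φ x₀ r₀)⁻¹ ≤
          morreyNorm n Φ.toFun w φ ((Metric.ball x₀ r₀).indicator fun _ => (1 : ℝ)) ∧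
        morreyNorm n Φ.toFun w φ ((Metric.ball x₀ r₀).indicator fun _ => (1 : ℝ)) ≤
          C * (φ x₀ r₀)⁻¹ := by
  have hc₁_top : c₁ ≠ ⊤ := by
    obtain ⟨hφ0, hφtop⟩ := hφ 0 1 one_pos
    intro h
    have := hG₁ 0 1 0 1 one_pos one_pos le_rfl
    rw [h, ENNReal.top_mul hφ0.ne', top_le_iff] at this
    exact hφtop.ne this
  refine ⟨max c₁⁻¹ c₂⁻¹, lt_max_of_lt_left (ENNReal.inv_pos.2 hc₁_top),
    max_lt (ENNReal.inv_lt_top.2 hc₁) (ENNReal.inv_lt_top.2 hc₂),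
    fun x₀ r₀ hr₀ => ⟨?_, ?_⟩⟩
  · exact inv_le_morreyNorm_indicator_ball Φ hr₀ (hw x₀ r₀ hr₀).1 (hw x₀ r₀ hr₀).2
  · exact morreyNorm_indicator_ball_le Φ hw hr₀ (hφ x₀ r₀ hr₀).1.ne' hc₁.ne' hc₂.ne'
      (fun x r hr => hG₁ x r x₀ r₀ hr hr₀) (fun x r hr => hG₂ x r x₀ r₀ hr hr₀)
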